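/- Let E be a unital trace-preserving completely positive map on M_n(ℂ) (E(1) = 1). If a projective measurement {P₁,…,P_m} (orthogonal projections summing to 1) is unconditionally preserved, i.e., there exist operators Q_k ≥ 0 with Σ_k Q_k = 1 and Tr(P_k ρ) = Tr(Q_k E(ρ)) for all density matrices ρ, then P_k = E†(Q_k) for all k, and each P_k is a fixed point of E† ∘ E. -/

import Mathlib

open Matrix
open scoped ComplexOrder

/-- A completely positive map on matrices (Kraus characterization). -/
def CompletelyPositive {n : ℕ}
    (E : Matrix (Fin n) (Fin n) ℂ → Matrix (Fin n) (Fin n) ℂ) : Prop :=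
  ∃ (k : ℕ) (K : Fin k → Matrix (Fin n) (Fin n) ℂ),
    ∀ X, E X = ∑ i, K i * X * (K i)ᴴ

/-- A trace-preserving map on matrices. -/
def TracePreserving {n : ℕ}
    (E : Matrix (Fin n) (Fin n) ℂ → Matrix (Fin n) (Fin n) ℂ) : Prop :=
  ∀ X, (E X).trace = X.trace

/-!
Extending `Tr (P ρ) = Tr (Q E(ρ))` from density matrices to all matrices (they span) shows
that `P` is the adjoint image `E' Q`. Tested on `P` and `1 - P`, the same identity gives
`Tr ((1 - Q) E(P)) = 0` and `Tr (Q E(1 - P)) = 0`; both are traces of products of positive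
semidefinite matrices, so the products vanish, whence `E(P) = Q` and `E' (E P) = E' Q = P`.
-/

open scoped MatrixOrder

namespace Matrix

variable {n 𝕜 : Type*} [Fintype n] [DecidableEq n] [RCLike 𝕜]

theorem linearMap_ext_of_posSemidef_of_trace_eq_one {M : Type*} [AddCommGroup M] [Module ℂ M]
    {f g : Matrix n n ℂ →ₗ[ℂ] M}
    (h : ∀ ρ : Matrix n n ℂ, ρ.PosSemidef → ρ.trace = 1 → f ρ = g ρ) : f = g := by
  refine LinearMap.ext_on CStarAlgebra.span_nonneg fun X (hX : 0 ≤ X) => ?_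
  by_cases h0 : X.trace = 0
  · simp [hX.posSemidef.trace_eq_zero_iff.mp h0]
  · have hρ := h (X.trace⁻¹ • X)
      (hX.posSemidef.smul (inv_nonneg_of_nonneg hX.posSemidef.trace_nonneg))
      (by rw [trace_smul, smul_eq_mul, inv_mul_cancel₀ h0])
    rwa [map_smul, map_smul, smul_right_inj (inv_ne_zero h0)] at hρ

/-- With `a, b` the square roots of `A, B`, `tr (A * B) = tr ((a * b)ᴴ * (a * b))`. -/
theorem PosSemidef.mul_eq_zero_of_trace_mul_eq_zero {A B : Matrix n n 𝕜}
    (hA : A.PosSemidef) (hB : B.PosSemidef) (h : (A * B).trace = 0) : A * B = 0 := by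
  set a := CFC.sqrt A
  set b := CFC.sqrt B
  have ha : a * a = A := CFC.sqrt_mul_sqrt_self A hA.nonneg
  have hb : b * b = B := CFC.sqrt_mul_sqrt_self B hB.nonneg
  have hab : a * b = 0 := by
    rw [← trace_conjTranspose_mul_self_eq_zero_iff, conjTranspose_mul,
      (CFC.sqrt_nonneg A).posSemidef.isHermitian.eq, (CFC.sqrt_nonneg B).posSemidef.isHermitian.eq]
    calc (b * a * (a * b)).trace = (b * (A * b)).trace := by
          rw [← ha]; simp only [Matrix.mul_assoc]
      _ = (A * B).trace := by rw [trace_mul_comm, Matrix.mul_assoc, hb]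
      _ = 0 := h
  calc A * B = a * (a * b) * b := by rw [← ha, ← hb]; simp only [Matrix.mul_assoc]
    _ = 0 := by rw [hab, mul_zero, zero_mul]

theorem IsStarProjection.map_eq_of_forall_trace_mul_eq
    {E : Matrix n n 𝕜 →ₗ[𝕜] Matrix n n 𝕜}
    (hE : ∀ X, X.PosSemidef → (E X).PosSemidef) (hTP : ∀ X, (E X).trace = X.trace)
    (hU : E 1 = 1) {P Q : Matrix n n 𝕜} (hP : IsStarProjection P) (hQ : Q.PosSemidef)
    (hQ_le : (1 - Q).PosSemidef) (h : ∀ X, (P * X).trace = (Q * E X).trace) : E P = Q := by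
  have hPP : P * P = P := hP.isIdempotentElem.eq
  have hQE : Q * E (1 - P) = 0 :=
    hQ.mul_eq_zero_of_trace_mul_eq_zero (hE _ hP.one_sub_nonneg.posSemidef) <| by
      rw [← h, hP.mul_one_sub_self, trace_zero]
  have hEQ : (1 - Q) * E P = 0 :=
    hQ_le.mul_eq_zero_of_trace_mul_eq_zero (hE _ hP.nonneg.posSemidef) <| by
      rw [sub_mul, trace_sub, one_mul, hTP, ← h, hPP, sub_self]
  rw [map_sub, hU, mul_sub, mul_one, sub_eq_zero] at hQE
  rw [sub_mul, one_mul, sub_eq_zero] at hEQ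
  exact hEQ.trans hQE.symm

end Matrix

theorem CompletelyPositive.posSemidef_apply {n : ℕ}
    {E : Matrix (Fin n) (Fin n) ℂ → Matrix (Fin n) (Fin n) ℂ} (hE : CompletelyPositive E)
    {X : Matrix (Fin n) (Fin n) ℂ} (hX : X.PosSemidef) : (E X).PosSemidef := by
  obtain ⟨k, K, hK⟩ := hE
  rw [hK]
  exact posSemidef_sum _ fun i _ => hX.mul_mul_conjTranspose_same (K i)

theorem unconditionally_preserved_measurement_general {n m : ℕ}
    (E E' : Module.End ℂ (Matrix (Fin n) (Fin n) ℂ))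
    (hCP : CompletelyPositive (⇑E)) (hTP : TracePreserving (⇑E))
    (hU : E 1 = 1)
    (hadj : ∀ A B : Matrix (Fin n) (Fin n) ℂ,
      (Aᴴ * E B).trace = ((E' A)ᴴ * B).trace)
    (P Q : Fin m → Matrix (Fin n) (Fin n) ℂ)
    (hPproj : ∀ k, (P k)ᴴ = P k ∧ P k * P k = P k)
    (hQpos : ∀ k, (Q k).PosSemidef)
    (hQsum : ∑ k, Q k = 1)
    (hpres : ∀ k, ∀ ρ : Matrix (Fin n) (Fin n) ℂ,
      ρ.PosSemidef → ρ.trace = 1 → (P k * ρ).trace = (Q k * E ρ).trace) :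
    ∀ k, P k = E' (Q k) ∧ E' (E (P k)) = P k := by
  intro k
  have hPk : IsStarProjection (P k) := ⟨(hPproj k).2, (hPproj k).1⟩
  have hQk_le : (1 - Q k).PosSemidef := (sub_nonneg.mpr <| hQsum ▸
    Finset.single_le_sum (fun j _ => (hQpos j).nonneg) (Finset.mem_univ k)).posSemidef
  have htr : ∀ X, (P k * X).trace = (Q k * E X).trace := LinearMap.congr_fun
    (linearMap_ext_of_posSemidef_of_trace_eq_one
      (f := traceLinearMap _ ℂ ℂ ∘ₗ LinearMap.mulLeft ℂ (P k))
      (g := traceLinearMap _ ℂ ℂ ∘ₗ LinearMap.mulLeft ℂ (Q k) ∘ₗ E) (hpres k))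
  have hEP : E (P k) = Q k := hPk.map_eq_of_forall_trace_mul_eq
    (fun _ => hCP.posSemidef_apply) hTP hU (hQpos k) hQk_le htr
  have hE'Q : (E' (Q k))ᴴ = P k := ext_iff_trace_mul_right.mpr fun X => by
    rw [← hadj, (hQpos k).isHermitian.eq, htr]
  have hP : E' (Q k) = P k := conjTranspose_inj.mp (hE'Q.trans (hPproj k).1.symm)
  exact ⟨hP.symm, by rw [hEP, hP]⟩

/-- For a unital CPTP map `E` with Hilbert–Schmidt adjoint `E'`, if a projective
measurement `{P k}` is unconditionally preserved — i.e. there are POVM elements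
`Q k ≥ 0` with `Σ Q k = 1` and `Tr(P k ρ) = Tr(Q k E(ρ))` for all density
matrices `ρ` — then `P k = E'(Q k)` and each `P k` is a fixed point of
`E' ∘ E`. -/
theorem unconditionally_preserved_measurement {n m : ℕ}
    (E E' : Module.End ℂ (Matrix (Fin n) (Fin n) ℂ))
    (hCP : CompletelyPositive (⇑E)) (hTP : TracePreserving (⇑E))
    (hU : E 1 = 1)
    (hadj : ∀ A B : Matrix (Fin n) (Fin n) ℂ,
      (Aᴴ * E B).trace = ((E' A)ᴴ * B).trace)
    (P Q : Fin m → Matrix (Fin n) (Fin n) ℂ)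
    (hPproj : ∀ k, (P k)ᴴ = P k ∧ P k * P k = P k)
    (hPsum : ∑ k, P k = 1)
    (hQpos : ∀ k, (Q k).PosSemidef)
    (hQsum : ∑ k, Q k = 1)
    (hpres : ∀ k, ∀ ρ : Matrix (Fin n) (Fin n) ℂ,
      ρ.PosSemidef → ρ.trace = 1 → (P k * ρ).trace = (Q k * E ρ).trace) :
    ∀ k, P k = E' (Q k) ∧ E' (E (P k)) = P k :=
  unconditionally_preserved_measurement_general E E' hCP hTP hU hadj P Q hPproj hQpos hQsum hpres
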